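/- Weighted POD optimality: with positive weights $w_1,\dots,w_{n_t}$ and snapshots $\varphi_i$ in a Hilbert space $\mathbb{V}$, for any $N$-dimensional subspace $V_N$ of $\mathrm{span}\{\varphi_i\}$ one has $\sum_{i=1}^{n_t} w_i\|\varphi_i - P_{V_N}\varphi_i\|_{\mathbb{V}}^2 \ge \sum_{k=N+1}^{n_t}\lambda_k$, where $\lambda_1\ge\cdots\ge\lambda_{n_t}\ge 0$ are the eigenvalues of the weighted Gram matrix of the rescaled snapshots $\sqrt{w_i}\,\varphi_i$; equality holds for the weighted POD space. -/

import Mathlib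

/-!
Put `uᵢ = √wᵢ φᵢ`; the weighted error of a subspace `K` is `∑ᵢ ‖uᵢ - P_K uᵢ‖²`. The modes
`ζₖ = ∑ⱼ ψₖⱼ uⱼ` are orthogonal with `‖ζₖ‖² = λₖ`, and since `ψ` is an orthogonal matrix,
`uᵢ = ∑ₖ ψₖᵢ ζₖ` and `∑ᵢ ⟪uᵢ, e⟫² = ∑ₖ ⟪ζₖ, e⟫²`. For an orthonormal basis `(bₘ)` of `K` the
error is therefore `∑ₖ λₖ - ∑ₖ tₖ λₖ` with `tₖ = ∑ₘ ⟪ζₖ, bₘ⟫² / λₖ`. Bessel's inequality, applied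
once to `(bₘ)` and once to the normalised modes, gives `0 ≤ tₖ ≤ 1` and `∑ₖ tₖ ≤ N`, so for
sorted `λ` the error is at least the tail `∑_{k ≥ N} λₖ` (Ky Fan). For the span of the first `N`
modes the residual of `uᵢ` is `∑_{k ≥ N} ψₖᵢ ζₖ`, whose squared norms add up to exactly that tail.
-/

open scoped RealInnerProductSpace

open Finset Matrix

theorem sum_mul_le_sum_head_of_antitone {n : ℕ} {lam t : Fin n → ℝ} (hlam : Antitone lam)
    (hlam0 : ∀ k, 0 ≤ lam k) (ht0 : ∀ k, 0 ≤ t k) (ht1 : ∀ k, t k ≤ 1) {N : ℕ}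
    (hts : ∑ k, t k ≤ N) :
    ∑ k, lam k * t k ≤ ∑ k ∈ univ.filter fun k : Fin n => (k : ℕ) < N, lam k := by
  rcases lt_or_ge N n with hN | hN
  · -- with the threshold `μ = lam N`, each term has `(lam k - μ) * (t k - [k < N]) ≤ 0`
    set μ := lam ⟨N, hN⟩
    have hterm : ∀ k, lam k * t k ≤
        (if (k : ℕ) < N then lam k else 0) + μ * (t k - if (k : ℕ) < N then 1 else 0) := by
      intro k
      split_ifs with hk
      · have : μ ≤ lam k := hlam (Fin.mk_le_of_le_val hk.le)
        nlinarith [ht1 k]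
      · have : lam k ≤ μ := hlam (Fin.le_def.mpr (not_lt.mp hk))
        nlinarith [ht0 k]
    have hcard : ∑ k : Fin n, (if (k : ℕ) < N then (1 : ℝ) else 0) = N := by
      rw [sum_boole, Fin.card_filter_val_lt, min_eq_right hN.le]
    calc ∑ k, lam k * t k
        ≤ ∑ k : Fin n, ((if (k : ℕ) < N then lam k else 0) +
            μ * (t k - if (k : ℕ) < N then 1 else 0)) := sum_le_sum fun k _ => hterm k
      _ = ∑ k ∈ univ.filter fun k : Fin n => (k : ℕ) < N, lam k + μ * (∑ k, t k - N) := by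
        rw [sum_add_distrib, ← mul_sum, sum_sub_distrib, hcard, sum_ite, sum_const_zero,
          add_zero]
      _ ≤ ∑ k ∈ univ.filter fun k : Fin n => (k : ℕ) < N, lam k := by
        nlinarith [hlam0 ⟨N, hN⟩]
  · have hall : ∀ k : Fin n, (k : ℕ) < N := fun k => k.isLt.trans_le hN
    rw [filter_true_of_mem fun k _ => hall k]
    exact sum_le_sum fun k _ => mul_le_of_le_one_right (hlam0 k) (ht1 k)

section OrthogonalMatrix

variable {ι R : Type*} [Fintype ι] [DecidableEq ι] [CommRing R] {ψ : Matrix ι ι R}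

theorem Matrix.mem_orthogonalGroup_of_dotProduct_eq
    (h : ∀ k l, ψ k ⬝ᵥ ψ l = if k = l then 1 else 0) : ψ ∈ orthogonalGroup ι R :=
  (mem_orthogonalGroup_iff ι R).mpr (ext fun k l => h k l)

theorem Matrix.sum_row_mul_row_of_mem_orthogonalGroup (hψ : ψ ∈ orthogonalGroup ι R) (k l : ι) :
    ∑ j, ψ k j * ψ l j = if k = l then 1 else 0 := by
  simpa [mul_apply, one_apply] using congrFun (congrFun ((mem_orthogonalGroup_iff ι R).mp hψ) k) l

theorem Matrix.sum_col_mul_col_of_mem_orthogonalGroup (hψ : ψ ∈ orthogonalGroup ι R) (i j : ι) :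
    ∑ k, ψ k i * ψ k j = if i = j then 1 else 0 := by
  simpa [mul_apply, one_apply] using
    congrFun (congrFun ((mem_orthogonalGroup_iff' ι R).mp hψ) i) j

end OrthogonalMatrix

section InnerProductSpace

variable {V : Type*} [NormedAddCommGroup V] [InnerProductSpace ℝ V]

theorem iInf_norm_sub_sq_eq_of_inner_eq_zero (K : Submodule ℝ V) {x p : V} (hp : p ∈ K)
    (hxp : ∀ v ∈ K, ⟪x - p, v⟫ = 0) :
    ⨅ v : K, ‖x - v‖ ^ 2 = ‖x - p‖ ^ 2 := by
  refine le_antisymm (ciInf_le ⟨0, ?_⟩ (⟨p, hp⟩ : K)) (le_ciInf fun v => ?_)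
  · rintro _ ⟨v, rfl⟩
    positivity
  · have hpyth : ‖x - v‖ ^ 2 = ‖x - p‖ ^ 2 + ‖p - v‖ ^ 2 := by
      rw [← sub_add_sub_cancel x p v, norm_add_sq_real, hxp _ (K.sub_mem hp v.2)]
      ring
    nlinarith [sq_nonneg ‖p - v‖]

theorem iInf_norm_sub_sq_eq_norm_sub_starProjection_sq (K : Submodule ℝ V)
    [K.HasOrthogonalProjection] (x : V) :
    ⨅ v : K, ‖x - v‖ ^ 2 = ‖x - K.starProjection x‖ ^ 2 :=
  iInf_norm_sub_sq_eq_of_inner_eq_zero K (K.starProjection_apply_mem x)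
    (K.starProjection_inner_eq_zero x)

theorem mul_iInf_norm_sub_sq (K : Submodule ℝ V) [K.HasOrthogonalProjection] {c : ℝ}
    (hc : 0 ≤ c) (x : V) :
    c * ⨅ v : K, ‖x - v‖ ^ 2 = ⨅ v : K, ‖√c • x - v‖ ^ 2 := by
  simp only [iInf_norm_sub_sq_eq_norm_sub_starProjection_sq, map_smul, ← smul_sub, norm_smul,
    mul_pow, Real.norm_eq_abs, sq_abs, Real.sq_sqrt hc]

theorem norm_sub_starProjection_sq (K : Submodule ℝ V) [K.HasOrthogonalProjection] (x : V) :
    ‖x - K.starProjection x‖ ^ 2 = ‖x‖ ^ 2 - ‖K.starProjection x‖ ^ 2 := by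
  rw [K.norm_sq_eq_add_norm_sq_starProjection x, K.starProjection_orthogonal_val]
  ring

theorem norm_starProjection_sq_eq_sum {K : Submodule ℝ V} {κ : Type*} [Fintype κ]
    [K.HasOrthogonalProjection] (b : OrthonormalBasis κ ℝ K) (x : V) :
    ‖K.starProjection x‖ ^ 2 = ∑ m, ⟪x, (b m : V)⟫ ^ 2 := by
  rw [K.starProjection_apply, Submodule.norm_coe, ← b.sum_sq_inner_left]
  refine sum_congr rfl fun m _ => ?_
  rw [Submodule.coe_inner, ← K.starProjection_apply, K.inner_starProjection_left_eq_right,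
    K.starProjection_eq_self_iff.mpr (b m).2]

section OrthogonalFamily

variable {ι : Type*} {ζ : ι → V}

theorem norm_sum_smul_sq_of_pairwise_inner_eq_zero
    (hζ : Pairwise fun k l => ⟪ζ k, ζ l⟫ = 0) (c : ι → ℝ) (s : Finset ι) :
    ‖∑ k ∈ s, c k • ζ k‖ ^ 2 = ∑ k ∈ s, c k ^ 2 * ‖ζ k‖ ^ 2 := by
  classical
  rw [← real_inner_self_eq_norm_sq, sum_inner]
  refine sum_congr rfl fun k hk => ?_
  rw [inner_sum, sum_eq_single_of_mem k hk fun l _ hlk => by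
    rw [real_inner_smul_left, real_inner_smul_right, hζ hlk.symm, mul_zero, mul_zero]]
  rw [real_inner_smul_left, real_inner_smul_right, real_inner_self_eq_norm_sq]
  ring

/-- Bessel's inequality for an orthogonal family that need not be normalised; a zero vector
contributes `0 / 0 = 0`. -/
theorem sum_inner_sq_div_norm_sq_le (hζ : Pairwise fun k l => ⟪ζ k, ζ l⟫ = 0)
    (s : Finset ι) (x : V) :
    ∑ k ∈ s, ⟪ζ k, x⟫ ^ 2 / ‖ζ k‖ ^ 2 ≤ ‖x‖ ^ 2 := by
  set c : ι → ℝ := fun k => ⟪ζ k, x⟫ / ‖ζ k‖ ^ 2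
  set p := ∑ k ∈ s, c k • ζ k
  have hcoef : ∀ k, c k ^ 2 * ‖ζ k‖ ^ 2 = c k * ⟪ζ k, x⟫ := fun k => by
    rcases eq_or_ne ‖ζ k‖ 0 with h | h
    · simp [c, h]
    · simp only [c]
      field_simp
  have hp : ‖p‖ ^ 2 = ∑ k ∈ s, ⟪ζ k, x⟫ ^ 2 / ‖ζ k‖ ^ 2 := by
    rw [norm_sum_smul_sq_of_pairwise_inner_eq_zero hζ]
    exact sum_congr rfl fun k _ => by rw [hcoef]; ring
  have hxp : ⟪p, x⟫ = ‖p‖ ^ 2 := by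
    rw [norm_sum_smul_sq_of_pairwise_inner_eq_zero hζ, sum_inner]
    exact sum_congr rfl fun k _ => by rw [real_inner_smul_left, hcoef]
  nlinarith [norm_sub_sq_real p x, sq_nonneg ‖p - x‖, real_inner_comm p x]

end OrthogonalFamily

theorem sum_sum_inner_sq_le_sum_head_norm_sq {n : ℕ} {ζ : Fin n → V}
    (hζ : Pairwise fun k l => ⟪ζ k, ζ l⟫ = 0) (hanti : Antitone fun k => ‖ζ k‖ ^ 2)
    {κ : Type*} [Fintype κ] {b : κ → V} (hb : Orthonormal ℝ b) :
    ∑ k, ∑ m, ⟪ζ k, b m⟫ ^ 2 ≤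
      ∑ k ∈ univ.filter fun k : Fin n => (k : ℕ) < Fintype.card κ, ‖ζ k‖ ^ 2 := by
  set S : Fin n → ℝ := fun k => ∑ m, ⟪ζ k, b m⟫ ^ 2
  have hS0 : ∀ k, 0 ≤ S k := fun k => sum_nonneg fun m _ => sq_nonneg _
  have hS_le : ∀ k, S k ≤ ‖ζ k‖ ^ 2 := fun k => by
    simpa [S, real_inner_comm] using hb.sum_inner_products_le (ζ k) (s := univ)
  have hS_eq : ∀ k, ‖ζ k‖ ^ 2 * (S k / ‖ζ k‖ ^ 2) = S k := fun k => by
    rcases eq_or_ne (‖ζ k‖ ^ 2) 0 with h | h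
    · simp [h, le_antisymm (h ▸ hS_le k) (hS0 k)]
    · exact mul_div_cancel₀ _ h
  have hsum : ∑ k, S k / ‖ζ k‖ ^ 2 ≤ Fintype.card κ := by
    calc ∑ k, S k / ‖ζ k‖ ^ 2 = ∑ m, ∑ k, ⟪ζ k, b m⟫ ^ 2 / ‖ζ k‖ ^ 2 := by
          simp only [S, sum_div]
          exact sum_comm
      _ ≤ ∑ m : κ, ‖b m‖ ^ 2 := sum_le_sum fun m _ => sum_inner_sq_div_norm_sq_le hζ _ _
      _ = Fintype.card κ := by simp [hb.1]
  calc ∑ k, S k = ∑ k, ‖ζ k‖ ^ 2 * (S k / ‖ζ k‖ ^ 2) := sum_congr rfl fun k _ => (hS_eq k).symm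
    _ ≤ _ := sum_mul_le_sum_head_of_antitone hanti (fun k => sq_nonneg _)
        (fun k => div_nonneg (hS0 k) (sq_nonneg _))
        (fun k => div_le_one_of_le₀ (hS_le k) (sq_nonneg _)) hsum

section PODModes

variable {ι : Type*} [Fintype ι]

def podMode (ψ : Matrix ι ι ℝ) (u : ι → V) (k : ι) : V := ∑ j, ψ k j • u j

variable {ψ : Matrix ι ι ℝ} {u : ι → V} {lam : ι → ℝ}

theorem inner_podMode_left (k : ι) (x : V) :
    ⟪podMode ψ u k, x⟫ = ∑ j, ψ k j * ⟪u j, x⟫ := by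
  simp only [podMode, sum_inner, real_inner_smul_left]

theorem inner_podMode_snapshot (heig : ∀ k, gram ℝ u *ᵥ ψ k = lam k • ψ k) (k i : ι) :
    ⟪podMode ψ u k, u i⟫ = lam k * ψ k i := by
  have := congrFun (heig k) i
  simp only [mulVec, dotProduct, gram_apply, Pi.smul_apply, smul_eq_mul] at this
  rw [inner_podMode_left, ← this]
  exact sum_congr rfl fun j _ => by rw [real_inner_comm, mul_comm]

variable [DecidableEq ι]

theorem inner_podMode_podMode (hψ : ψ ∈ orthogonalGroup ι ℝ)
    (heig : ∀ k, gram ℝ u *ᵥ ψ k = lam k • ψ k) (k l : ι) :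
    ⟪podMode ψ u k, podMode ψ u l⟫ = if k = l then lam k else 0 := by
  rw [show podMode ψ u l = ∑ j, ψ l j • u j from rfl, inner_sum]
  simp only [real_inner_smul_right, inner_podMode_snapshot heig]
  calc ∑ j, ψ l j * (lam k * ψ k j) = lam k * ∑ j, ψ k j * ψ l j := by
        rw [mul_sum]
        exact sum_congr rfl fun j _ => by ring
    _ = if k = l then lam k else 0 := by
        rw [sum_row_mul_row_of_mem_orthogonalGroup hψ, mul_ite, mul_one, mul_zero]

theorem pairwise_inner_podMode_eq_zero (hψ : ψ ∈ orthogonalGroup ι ℝ)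
    (heig : ∀ k, gram ℝ u *ᵥ ψ k = lam k • ψ k) :
    Pairwise fun k l => ⟪podMode ψ u k, podMode ψ u l⟫ = 0 := fun k l hkl => by
  simp only [inner_podMode_podMode hψ heig, if_neg hkl]

theorem norm_podMode_sq (hψ : ψ ∈ orthogonalGroup ι ℝ)
    (heig : ∀ k, gram ℝ u *ᵥ ψ k = lam k • ψ k) (k : ι) :
    ‖podMode ψ u k‖ ^ 2 = lam k := by
  rw [← real_inner_self_eq_norm_sq, inner_podMode_podMode hψ heig, if_pos rfl]

theorem sum_smul_podMode (hψ : ψ ∈ orthogonalGroup ι ℝ) (i : ι) :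
    ∑ k, ψ k i • podMode ψ u k = u i := by
  simp only [podMode, smul_sum, smul_smul]
  rw [sum_comm]
  simp only [← sum_smul, sum_col_mul_col_of_mem_orthogonalGroup hψ, ite_smul, one_smul,
    zero_smul, sum_ite_eq, mem_univ, if_true]

theorem sum_inner_podMode_sq (hψ : ψ ∈ orthogonalGroup ι ℝ) (x : V) :
    ∑ k, ⟪podMode ψ u k, x⟫ ^ 2 = ∑ i, ⟪u i, x⟫ ^ 2 := by
  set a : ι → ℝ := fun j => ⟪u j, x⟫
  have hmode : ∀ k, ⟪podMode ψ u k, x⟫ = (ψ *ᵥ a) k := fun k => inner_podMode_left k x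
  calc ∑ k, ⟪podMode ψ u k, x⟫ ^ 2 = (ψ *ᵥ a) ⬝ᵥ (ψ *ᵥ a) := by
        simp only [hmode, dotProduct, sq]
    _ = (a ᵥ* ψᵀ) ⬝ᵥ (ψ *ᵥ a) := by rw [vecMul_transpose]
    _ = a ⬝ᵥ (ψᵀ *ᵥ (ψ *ᵥ a)) := (dotProduct_mulVec _ _ _).symm
    _ = a ⬝ᵥ a := by rw [mulVec_mulVec, (mem_orthogonalGroup_iff' ι ℝ).mp hψ, one_mulVec]
    _ = ∑ i, ⟪u i, x⟫ ^ 2 := by simp only [a, dotProduct, sq]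

theorem sum_norm_sum_smul_podMode_sq (hψ : ψ ∈ orthogonalGroup ι ℝ)
    (heig : ∀ k, gram ℝ u *ᵥ ψ k = lam k • ψ k) (s : Finset ι) :
    ∑ i, ‖∑ k ∈ s, ψ k i • podMode ψ u k‖ ^ 2 = ∑ k ∈ s, lam k := by
  have hrow : ∀ k, ∑ i, ψ k i ^ 2 = 1 := fun k => by
    simpa [sq] using sum_row_mul_row_of_mem_orthogonalGroup hψ k k
  simp only [norm_sum_smul_sq_of_pairwise_inner_eq_zero (pairwise_inner_podMode_eq_zero hψ heig),
    norm_podMode_sq hψ heig]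
  rw [sum_comm]
  exact sum_congr rfl fun k _ => by rw [← sum_mul, hrow, one_mul]

end PODModes

theorem sum_tail_le_sum_iInf_norm_sub_sq {n N : ℕ} {ψ : Matrix (Fin n) (Fin n) ℝ}
    {u : Fin n → V} {lam : Fin n → ℝ} (hψ : ψ ∈ orthogonalGroup (Fin n) ℝ)
    (heig : ∀ k, gram ℝ u *ᵥ ψ k = lam k • ψ k) (hlam : Antitone lam)
    (K : Submodule ℝ V) [FiniteDimensional ℝ K] (hK : Module.finrank ℝ K = N) :
    ∑ k ∈ univ.filter fun k : Fin n => N ≤ (k : ℕ), lam k ≤ ∑ i, ⨅ v : K, ‖u i - v‖ ^ 2 := by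
  set ζ := podMode ψ u
  set b := stdOrthonormalBasis ℝ K
  have hb : Orthonormal ℝ fun m => (b m : V) := b.orthonormal.comp_linearIsometry K.subtypeₗᵢ
  have htrace : ∑ i, ‖u i‖ ^ 2 = ∑ k, lam k := by
    simpa only [sum_smul_podMode hψ] using sum_norm_sum_smul_podMode_sq hψ heig univ
  have herror : ∑ i, ⨅ v : K, ‖u i - v‖ ^ 2 = ∑ k, lam k - ∑ k, ∑ m, ⟪ζ k, b m⟫ ^ 2 := by
    calc ∑ i, ⨅ v : K, ‖u i - v‖ ^ 2 = ∑ i, (‖u i‖ ^ 2 - ∑ m, ⟪u i, (b m : V)⟫ ^ 2) :=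
          sum_congr rfl fun i _ => by
            rw [iInf_norm_sub_sq_eq_norm_sub_starProjection_sq, norm_sub_starProjection_sq,
              norm_starProjection_sq_eq_sum b]
      _ = ∑ k, lam k - ∑ m, ∑ i, ⟪u i, (b m : V)⟫ ^ 2 := by
          rw [sum_sub_distrib, htrace, sum_comm]
      _ = ∑ k, lam k - ∑ k, ∑ m, ⟪ζ k, b m⟫ ^ 2 := by
          congr 1
          conv_rhs => rw [sum_comm]
          exact sum_congr rfl fun m _ => (sum_inner_podMode_sq hψ _).symm
  have hKyFan := sum_sum_inner_sq_le_sum_head_norm_sq (pairwise_inner_podMode_eq_zero hψ heig)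
    (by simpa only [norm_podMode_sq hψ heig] using hlam) hb
  simp only [Fintype.card_fin, hK, norm_podMode_sq hψ heig] at hKyFan
  have hsplit := sum_filter_add_sum_filter_not univ (fun k : Fin n => (k : ℕ) < N) lam
  simp only [not_lt] at hsplit
  linarith

theorem sum_iInf_norm_sub_sq_span_podMode {ι : Type*} [Fintype ι] [DecidableEq ι]
    {ψ : Matrix ι ι ℝ} {u : ι → V} {lam : ι → ℝ} (hψ : ψ ∈ orthogonalGroup ι ℝ)
    (heig : ∀ k, gram ℝ u *ᵥ ψ k = lam k • ψ k) (p : ι → Prop) [DecidablePred p] :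
    ∑ i, ⨅ v : Submodule.span ℝ (podMode ψ u '' {k | p k}), ‖u i - v‖ ^ 2 =
      ∑ k ∈ univ.filter fun k => ¬ p k, lam k := by
  set K := Submodule.span ℝ (podMode ψ u '' {k | p k})
  have hmem : ∀ i, ∑ k ∈ univ.filter p, ψ k i • podMode ψ u k ∈ K := fun i =>
    K.sum_mem fun k hk => K.smul_mem _ (Submodule.subset_span ⟨k, (mem_filter.mp hk).2, rfl⟩)
  have hres : ∀ i, u i - ∑ k ∈ univ.filter p, ψ k i • podMode ψ u k =
      ∑ k ∈ univ.filter fun k => ¬ p k, ψ k i • podMode ψ u k := fun i => by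
    rw [← sum_smul_podMode (u := u) hψ i, ← sum_filter_add_sum_filter_not univ p,
      add_sub_cancel_left]
  have hperp : ∀ i, ∀ v ∈ K,
      ⟪∑ k ∈ univ.filter fun k => ¬ p k, ψ k i • podMode ψ u k, v⟫ = 0 := by
    intro i v hv
    refine Submodule.mem_orthogonal_singleton_iff_inner_right.mp (Submodule.span_le.mpr ?_ hv)
    rintro _ ⟨l, hl, rfl⟩
    rw [SetLike.mem_coe, Submodule.mem_orthogonal_singleton_iff_inner_right, sum_inner]
    refine sum_eq_zero fun k hk => ?_
    have hkl : k ≠ l := fun h => (mem_filter.mp hk).2 (h ▸ hl)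
    rw [real_inner_smul_left, pairwise_inner_podMode_eq_zero hψ heig hkl, mul_zero]
  rw [← sum_norm_sum_smul_podMode_sq hψ heig]
  refine sum_congr rfl fun i _ => ?_
  rw [iInf_norm_sub_sq_eq_of_inner_eq_zero K (hmem i) fun v hv => hres i ▸ hperp i v hv, hres]

end InnerProductSpace

/-- Weighted POD optimality: with positive weights `wᵢ`, for any `N`-dimensional subspace
`V_N` of the span of the snapshots, the weighted total squared projection error
`∑ᵢ wᵢ ‖φᵢ - P_{V_N} φᵢ‖²` is at least the tail sum of the sorted eigenvalues of the
weighted Gram matrix `√(wᵢwⱼ)⟪φᵢ,φⱼ⟫` of the rescaled snapshots `√wᵢ φᵢ`; equality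
holds for the weighted POD space built from its leading eigenvectors. -/
theorem weighted_pod_optimality
    {V : Type*} [NormedAddCommGroup V] [InnerProductSpace ℝ V]
    (nt N : ℕ) (hN : N ≤ nt) (φ : Fin nt → V)
    (w : Fin nt → ℝ) (hw : ∀ i, 0 < w i)
    (Chatw : Matrix (Fin nt) (Fin nt) ℝ)
    (hChatw : ∀ i j, Chatw i j = Real.sqrt (w i) * Real.sqrt (w j) * ⟪φ i, φ j⟫)
    (lam : Fin nt → ℝ) (ψ : Fin nt → Fin nt → ℝ)
    (heig : ∀ k, Chatw.mulVec (ψ k) = lam k • ψ k)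
    (horth : ∀ k l, dotProduct (ψ k) (ψ l) = if k = l then (1 : ℝ) else 0)
    (hsort : ∀ k l : Fin nt, k ≤ l → lam l ≤ lam k) :
    (∀ VN : Submodule ℝ V, VN ≤ Submodule.span ℝ (Set.range φ) →
      Module.finrank ℝ VN = N →
      (∑ k ∈ Finset.univ.filter fun k : Fin nt => N ≤ (k : ℕ), lam k) ≤
        ∑ i, w i * ⨅ v : VN, ‖φ i - (v : V)‖ ^ 2) ∧
    (∑ i, w i * ⨅ v : (Submodule.span ℝ
          (Set.range fun k : Fin N =>
            ∑ j, ψ (Fin.castLE hN k) j • (Real.sqrt (w j) • φ j)) : Submodule ℝ V),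
        ‖φ i - (v : V)‖ ^ 2) =
      ∑ k ∈ Finset.univ.filter fun k : Fin nt => N ≤ (k : ℕ), lam k := by
  set u : Fin nt → V := fun i => √(w i) • φ i
  have hgram : Chatw = gram ℝ u := by
    ext i j
    rw [hChatw, gram_apply, real_inner_smul_left, real_inner_smul_right]
    ring
  have hψ : ψ ∈ orthogonalGroup (Fin nt) ℝ := mem_orthogonalGroup_of_dotProduct_eq horth
  rw [hgram] at heig
  have hweight : ∀ (K : Submodule ℝ V) [K.HasOrthogonalProjection],
      ∑ i, w i * ⨅ v : K, ‖φ i - v‖ ^ 2 = ∑ i, ⨅ v : K, ‖u i - v‖ ^ 2 := fun K _ =>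
    sum_congr rfl fun i _ => mul_iInf_norm_sub_sq K (hw i).le (φ i)
  refine ⟨fun VN hle hrank => ?_, ?_⟩
  · have : FiniteDimensional ℝ (Submodule.span ℝ (Set.range φ)) :=
      FiniteDimensional.span_of_finite ℝ (Set.finite_range φ)
    have : FiniteDimensional ℝ VN := Submodule.finiteDimensional_of_le hle
    rw [hweight]
    exact sum_tail_le_sum_iInf_norm_sub_sq hψ heig hsort VN hrank
  · have hspan : Set.range (fun k : Fin N => ∑ j, ψ (Fin.castLE hN k) j • u j) =
        podMode ψ u '' {k | (k : ℕ) < N} := by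
      rw [← Fin.range_castLE hN, ← Set.range_comp]
      rfl
    have : FiniteDimensional ℝ (Submodule.span ℝ (podMode ψ u '' {k | (k : ℕ) < N})) :=
      FiniteDimensional.span_of_finite ℝ ((Set.toFinite _).image _)
    rw [hspan, hweight, sum_iInf_norm_sub_sq_span_podMode hψ heig]
    simp only [not_lt]
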